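/- arXiv:2307.02954 — 3 statements merged into one kernel-verified Lean document; each statement's English description precedes it below -/
import Mathlib

section
/- Let m ≥ 1, λ > 0, k ∈ ℕ, and w > 0 with κ ∈ ℕ, κ ≥ 1, and κ·w > 0. For j = 1, …, 2^k let X⁽ʲ⁾ be mutually independent random variables, where each X⁽ʲ⁾ is a sum of m mutually independent mean-zero random variables taking values in [-λ/m, λ/m]. Then P[max_{1 ≤ j ≤ 2^k} X⁽ʲ⁾ ≥ κw] ≤ 1 - (1 - exp(-m(κw)²/(2λ²)))^{2^k}. -/
open MeasureTheory ProbabilityTheory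

lemma aux_integrable_exp_mul {Ω : Type*} [MeasureSpace Ω] [IsProbabilityMeasure (ℙ : Measure Ω)]
    {c : ℝ} (t : ℝ) (Y : Ω → ℝ) (hYm : Measurable Y)
    (hbdd : ∀ᵐ ω ∂ℙ, Y ω ∈ Set.Icc (-c) c) :
    Integrable (fun ω => Real.exp (t * Y ω)) ℙ := by
  refine Integrable.mono' (integrable_const (Real.exp (|t| * c)))
    ((hYm.const_mul t).exp).aestronglyMeasurable ?_
  filter_upwards [hbdd] with ω h
  rw [Real.norm_eq_abs, abs_of_pos (Real.exp_pos _), Real.exp_le_exp]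
  calc t * Y ω ≤ |t * Y ω| := le_abs_self _
    _ = |t| * |Y ω| := abs_mul _ _
    _ ≤ |t| * c := by
        have : |Y ω| ≤ c := abs_le.2 ⟨h.1, h.2⟩
        exact mul_le_mul_of_nonneg_left this (abs_nonneg t)

/-- Hoeffding's lemma for a mean-zero random variable bounded in `[-c, c]`. -/
lemma aux_hoeffding_mgf {Ω : Type*} [MeasureSpace Ω] [IsProbabilityMeasure (ℙ : Measure Ω)]
    {c : ℝ} (hc : 0 < c) (s : ℝ) (Y : Ω → ℝ) (hYm : Measurable Y)
    (hbdd : ∀ᵐ ω ∂ℙ, Y ω ∈ Set.Icc (-c) c) (hmean : ∫ ω, Y ω ∂ℙ = 0) :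
    mgf Y ℙ s ≤ Real.exp (s ^ 2 * c ^ 2 / 2) := by
  set A := (Real.exp (s * c) - Real.exp (-(s * c))) / (2 * c) with hA
  set B := (Real.exp (s * c) + Real.exp (-(s * c))) / 2 with hB
  have hYint : Integrable Y ℙ := by
    refine Integrable.mono' (integrable_const c) hYm.aestronglyMeasurable ?_
    filter_upwards [hbdd] with ω h
    rw [Real.norm_eq_abs]; exact abs_le.2 ⟨h.1, h.2⟩
  have hexpint : Integrable (fun ω => Real.exp (s * Y ω)) ℙ :=
    aux_integrable_exp_mul s Y hYm hbdd
  have hpt : ∀ᵐ ω ∂ℙ, Real.exp (s * Y ω) ≤ A * Y ω + B := by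
    filter_upwards [hbdd] with ω h
    set y := Y ω
    have hθ : 0 ≤ (c - y) / (2 * c) := by
      apply div_nonneg (by linarith [h.2]) (by linarith)
    have hη : 0 ≤ (c + y) / (2 * c) := by
      apply div_nonneg (by linarith [h.1]) (by linarith)
    have hsum : (c - y) / (2 * c) + (c + y) / (2 * c) = 1 := by
      field_simp; ring
    have key := convexOn_exp.2 (Set.mem_univ (s * (-c))) (Set.mem_univ (s * c)) hθ hη hsum
    simp only [smul_eq_mul, mul_neg] at key
    have harg : -((c - y) / (2 * c) * (s * c)) + (c + y) / (2 * c) * (s * c) = s * y := by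
      field_simp
      ring
    rw [harg] at key
    refine key.trans (le_of_eq ?_)
    rw [hA, hB]
    field_simp
    ring
  have hint2 : Integrable (fun ω => A * Y ω + B) ℙ :=
    (hYint.const_mul A).add (integrable_const B)
  calc mgf Y ℙ s = ∫ ω, Real.exp (s * Y ω) ∂ℙ := rfl
    _ ≤ ∫ ω, A * Y ω + B ∂ℙ := integral_mono_ae hexpint hint2 hpt
    _ = A * (∫ ω, Y ω ∂ℙ) + B := by
        rw [integral_add (hYint.const_mul A) (integrable_const B), integral_const_mul,
          integral_const, probReal_univ, one_smul]
    _ = B := by rw [hmean, mul_zero, zero_add]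
    _ = Real.cosh (s * c) := by rw [Real.cosh_eq]
    _ ≤ Real.exp ((s * c) ^ 2 / 2) := Real.cosh_le_exp_half_sq _
    _ = Real.exp (s ^ 2 * c ^ 2 / 2) := by rw [mul_pow]

/-- Best of `2^k` independent chunked sandwich revenues: each `X⁽ʲ⁾ = ∑_{i<m} Y j i` is a sum
of `m` independent mean-zero variables with values in `[-λ/m, λ/m]`, and the `X⁽ʲ⁾` are mutually
independent; then `P[max_j X⁽ʲ⁾ ≥ κw] ≤ 1 - (1 - exp (-m (κw)² / (2λ²)))^(2^k)`. -/
theorem stmt_4 {Ω : Type*} [MeasureSpace Ω] [IsProbabilityMeasure (ℙ : Measure Ω)]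
    (m : ℕ) (hm : 1 ≤ m) (lam : ℝ) (hlam : 0 < lam) (k : ℕ)
    (κ : ℕ) (hκ : 1 ≤ κ) (w : ℝ) (hw : 0 < w)
    (Y : Fin (2 ^ k) → Fin m → Ω → ℝ)
    (X : Fin (2 ^ k) → Ω → ℝ)
    (hX : ∀ j ω, X j ω = ∑ i, Y j i ω)
    (hmeas : ∀ j i, Measurable (Y j i))
    (hindep_chunks : ∀ j, iIndepFun (Y j) ℙ)
    (hindep_perms : iIndepFun X ℙ)
    (hbdd : ∀ j i, ∀ᵐ ω ∂ℙ, Y j i ω ∈ Set.Icc (-(lam / m)) (lam / m))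
    (hmean : ∀ j i, ∫ ω, Y j i ω ∂ℙ = 0) :
    ℙ {ω | ∃ j, (κ : ℝ) * w ≤ X j ω} ≤
      ENNReal.ofReal
        (1 - (1 - Real.exp (-(m : ℝ) * ((κ : ℝ) * w) ^ 2 / (2 * lam ^ 2))) ^ (2 ^ k)) := by
  have hm0 : (0 : ℝ) < m := by exact_mod_cast hm
  set ε : ℝ := (κ : ℝ) * w with hε_def
  have hε : 0 < ε := by
    have : (0 : ℝ) < κ := by exact_mod_cast hκ
    positivity
  set c : ℝ := lam / m with hc_def
  have hc : 0 < c := div_pos hlam hm0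
  set t : ℝ := ε * m / lam ^ 2 with ht_def
  have ht : 0 ≤ t := by positivity
  set e : ℝ := Real.exp (-(m : ℝ) * ε ^ 2 / (2 * lam ^ 2)) with he_def
  have he_pos : 0 < e := Real.exp_pos _
  have he_lt_one : e < 1 := by
    rw [he_def, Real.exp_lt_one_iff, neg_mul, neg_div, neg_lt_zero]
    positivity
  have hXeq : ∀ j, X j = ∑ i, Y j i := by
    intro j; funext ω; rw [hX]; simp
  have hXm : ∀ j, Measurable (X j) := by
    intro j; rw [hXeq j, Finset.sum_fn]
    exact Finset.measurable_sum _ fun i _ => hmeas j i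
  -- tail bound for each X j
  have htail : ∀ j, (ℙ {ω | ε ≤ X j ω}).toReal ≤ e := by
    intro j
    have hint : Integrable (fun ω => Real.exp (t * X j ω)) ℙ := by
      rw [hXeq]
      exact (hindep_chunks j).integrable_exp_mul_sum (hmeas j)
        (fun i _ => aux_integrable_exp_mul t (Y j i) (hmeas j i) (hbdd j i))
    have hchern := measure_ge_le_exp_mul_mgf (μ := ℙ) (X := X j) ε ht hint
    have hmgf : mgf (X j) ℙ t ≤ Real.exp ((m : ℝ) * (t ^ 2 * c ^ 2 / 2)) := by
      rw [hXeq, (hindep_chunks j).mgf_sum (hmeas j) Finset.univ]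
      calc ∏ i, mgf (Y j i) ℙ t
          ≤ ∏ _i : Fin m, Real.exp (t ^ 2 * c ^ 2 / 2) :=
            Finset.prod_le_prod (fun i _ => mgf_nonneg)
              (fun i _ => aux_hoeffding_mgf hc t (Y j i) (hmeas j i) (hbdd j i) (hmean j i))
        _ = Real.exp ((m : ℝ) * (t ^ 2 * c ^ 2 / 2)) := by
            rw [Finset.prod_const, Finset.card_univ, Fintype.card_fin, ← Real.exp_nat_mul]
    calc (ℙ {ω | ε ≤ X j ω}).toReal
        ≤ Real.exp (-t * ε) * mgf (X j) ℙ t := hchern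
      _ ≤ Real.exp (-t * ε) * Real.exp ((m : ℝ) * (t ^ 2 * c ^ 2 / 2)) := by
          exact mul_le_mul_of_nonneg_left hmgf (le_of_lt (Real.exp_pos _))
      _ = e := by
          rw [← Real.exp_add, he_def]
          congr 1
          rw [ht_def, hc_def]
          field_simp
          ring
  set E : Fin (2 ^ k) → Set Ω := fun j => {ω | ε ≤ X j ω} with hE_def
  have hEmeas : ∀ j, MeasurableSet (E j) := fun j => measurableSet_le measurable_const (hXm j)
  have htail' : ∀ j, ℙ (E j) ≤ ENNReal.ofReal e := by
    intro j
    rw [← ENNReal.ofReal_toReal (measure_ne_top ℙ (E j))]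
    exact ENNReal.ofReal_le_ofReal (htail j)
  have hcompl_ge : ∀ j, ENNReal.ofReal (1 - e) ≤ ℙ ((E j)ᶜ) := by
    intro j
    rw [prob_compl_eq_one_sub (hEmeas j),
      ENNReal.ofReal_sub _ he_pos.le, ENNReal.ofReal_one]
    exact tsub_le_tsub_left (htail' j) 1
  have hprod : ℙ (⋂ j, (E j)ᶜ) = ∏ j, ℙ ((E j)ᶜ) := by
    apply hindep_perms.meas_iInter
    intro j
    exact ⟨Set.Iio ε, measurableSet_Iio, by ext ω; simp [E, not_le]⟩
  have hprod_ge : ENNReal.ofReal ((1 - e) ^ 2 ^ k) ≤ ℙ (⋂ j, (E j)ᶜ) := by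
    rw [hprod, ENNReal.ofReal_pow (by linarith)]
    calc (ENNReal.ofReal (1 - e)) ^ 2 ^ k
        = ∏ _j : Fin (2 ^ k), ENNReal.ofReal (1 - e) := by
          rw [Finset.prod_const, Finset.card_univ, Fintype.card_fin]
      _ ≤ ∏ j, ℙ ((E j)ᶜ) := Finset.prod_le_prod' fun j _ => hcompl_ge j
  have hset : {ω | ∃ j, (κ : ℝ) * w ≤ X j ω} = ⋃ j, E j := by
    ext ω; simp [E, hε_def]
  rw [hset]
  have hU : ℙ (⋃ j, E j) = 1 - ℙ (⋂ j, (E j)ᶜ) := by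
    have h1 : (⋂ j, (E j)ᶜ) = (⋃ j, E j)ᶜ := by rw [Set.compl_iUnion]
    rw [h1, prob_compl_eq_one_sub (MeasurableSet.iUnion fun j => hEmeas j),
      ENNReal.sub_sub_cancel ENNReal.one_ne_top prob_le_one]
  rw [hU]
  calc 1 - ℙ (⋂ j, (E j)ᶜ) ≤ 1 - ENNReal.ofReal ((1 - e) ^ 2 ^ k) :=
        tsub_le_tsub_left hprod_ge 1
    _ = ENNReal.ofReal (1 - (1 - e) ^ 2 ^ k) := by
        rw [ENNReal.ofReal_sub _ (pow_nonneg (by linarith) _), ENNReal.ofReal_one]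
end

section
/- Let x, y, a, δ > 0 and f ∈ [0,1) be real numbers. Consider a CPMM pool with reserves (x, y), and the pool after a prior X-to-Y swap of effective size a, whose reserves are (x + a, x·y/(x + a)). Then the exchange rate for a subsequent trade of size δ is strictly larger in the updated pool: (x + a + (1-f)δ)·(x + a) / (x·y·(1-f)) > (x + (1-f)δ)/(y·(1-f)). -/
/-! Multiplying the old rate by `x / x` puts both rates over the common denominator `x·y·(1 - f)`,
so the claim reduces to comparing `(u + (1 - f)δ)·u` at `u = x` and `u = x + a`, and this
product is strictly increasing in `u ≥ 0`. -/

theorem add_mul_self_lt_add_mul_self {α : Type*} [Semiring α] [PartialOrder α]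
    [IsStrictOrderedRing α] {u v d : α} (hu : 0 ≤ u) (huv : u < v) (hd : 0 ≤ d) :
    (u + d) * u < (v + d) * v :=
  mul_lt_mul'' (add_lt_add_of_lt_of_le huv le_rfl) huv (add_nonneg hu hd) hu

theorem stmt_11_general (x y a δ f : ℝ)
    (hx : 0 < x) (hy : 0 < y) (ha : 0 < a) (hδ : 0 < δ) (hf1 : f < 1) :
    (x + (1 - f) * δ) / (y * (1 - f)) <
      (x + a + (1 - f) * δ) * (x + a) / (x * y * (1 - f)) := by
  have hc : 0 < 1 - f := sub_pos.mpr hf1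
  have common_denom : (x + (1 - f) * δ) / (y * (1 - f)) =
      (x + (1 - f) * δ) * x / (x * y * (1 - f)) := by
    field_simp
  rw [common_denom]
  gcongr ?_ / _
  exact add_mul_self_lt_add_mul_self hx.le (lt_add_of_pos_right x ha) (by positivity)

/-- A prior X-to-Y swap of effective size `a` strictly increases the CPMM exchange rate for a
subsequent trade of size `δ`: the rate in the updated pool `(x + a, x·y/(x + a))` exceeds the
rate in the original pool `(x, y)`. -/
theorem stmt_11 (x y a δ f : ℝ)
    (hx : 0 < x) (hy : 0 < y) (ha : 0 < a) (hδ : 0 < δ) (hf0 : 0 ≤ f) (hf1 : f < 1) :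
    (x + (1 - f) * δ) / (y * (1 - f)) <
      (x + a + (1 - f) * δ) * (x + a) / (x * y * (1 - f)) :=
  stmt_11_general x y a δ f hx hy ha hδ hf1
end

section
/- Let x, y, δ, Δ > 0 be real numbers. In a zero-fee CPMM with initial reserves (x, y): the attacker first swaps δ units of X, receiving y₁ = y·δ/(x + δ) units of Y, leaving reserves (x + δ, x·y/(x + δ)); the victim then swaps Δ units of X, leaving reserves (x + δ + Δ, x·y/(x + δ + Δ)); finally the attacker swaps its y₁ units of Y back, receiving δ' = (x + δ + Δ)·y₁ / (x·y/(x + δ + Δ) + y₁) units of X. Then δ' = δ·(x + δ + Δ)² / ((x + δ)² + Δ·δ) and δ' > δ, i.e., the sandwich attack yields a strictly positive profit δ' - δ. -/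
/-! The attacker's round trip returns `δ(x+δ+Δ)² / ((x+δ)² + Δδ)`, independently of `y`, and
`(x+δ+Δ)² - ((x+δ)² + Δδ) = Δ(2x+δ+Δ)` is positive, so more than `δ` comes back. -/

lemma sandwich_return_eq {x y δ Δ : ℝ} (hx : 0 < x) (hy : 0 < y) (hδ : 0 ≤ δ) (hΔ : 0 ≤ Δ) :
    (x + δ + Δ) * (y * δ / (x + δ)) / (x * y / (x + δ + Δ) + y * δ / (x + δ)) =
      δ * (x + δ + Δ) ^ 2 / ((x + δ) ^ 2 + Δ * δ) := by
  have hxδ : 0 < x + δ := by linarith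
  have hs : 0 < x + δ + Δ := by linarith
  rw [div_eq_div_iff (by positivity) (by positivity)]
  field_simp
  ring

lemma lt_sandwich_return {x δ Δ : ℝ} (hx : 0 ≤ x) (hδ : 0 < δ) (hΔ : 0 < Δ) :
    δ < δ * (x + δ + Δ) ^ 2 / ((x + δ) ^ 2 + Δ * δ) := by
  have hgain : (x + δ) ^ 2 + Δ * δ < (x + δ + Δ) ^ 2 := by
    nlinarith [mul_pos hΔ (by linarith : 0 < 2 * x + δ + Δ)]
  rw [lt_div_iff₀ (by positivity)]
  exact mul_lt_mul_of_pos_left hgain hδ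

/-- Sandwich attack profitability in a zero-fee CPMM: front-running the victim trade `Δ` with
`δ` units of X and back-running with the received `y₁ = y·δ/(x+δ)` units of Y returns
`δ' = δ(x+δ+Δ)²/((x+δ)² + Δδ)` units of X, which is strictly more than `δ`. -/
theorem stmt_12 (x y δ Δ y₁ δ' : ℝ)
    (hx : 0 < x) (hy : 0 < y) (hδ : 0 < δ) (hΔ : 0 < Δ)
    (hy₁ : y₁ = y * δ / (x + δ))
    (hδ' : δ' = (x + δ + Δ) * y₁ / (x * y / (x + δ + Δ) + y₁)) :
    δ' = δ * (x + δ + Δ) ^ 2 / ((x + δ) ^ 2 + Δ * δ) ∧ δ < δ' := by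
  have hclosed : δ' = δ * (x + δ + Δ) ^ 2 / ((x + δ) ^ 2 + Δ * δ) := by
    rw [hδ', hy₁, sandwich_return_eq hx hy hδ.le hΔ.le]
  exact ⟨hclosed, hclosed ▸ lt_sandwich_return hx.le hδ hΔ⟩
end
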